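/- arXiv:2406.04623 — 2 statements merged into one kernel-verified Lean document; each statement's English description precedes it below -/
import Mathlib

section
/- The collection β_R = {σ_r : r ∈ R} forms a basis for a topology on R. -/
def sigmaSet {R : Type*} [CommRing R] (r : R) : Set R :=
  {s | ∃ u v : R, u * r + v * s = 1}

/-- The collection β_R = {σ_r : r ∈ R} is a basis for the topology it generates. -/
theorem macias_basis (R : Type*) [CommRing R] :
    @TopologicalSpace.IsTopologicalBasis R
      (TopologicalSpace.generateFrom (Set.range (sigmaSet (R := R))))
      (Set.range (sigmaSet (R := R))) := by
  letI : TopologicalSpace R := TopologicalSpace.generateFrom (Set.range (sigmaSet (R := R)))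
  refine ⟨?_, ?_, rfl⟩
  · rintro _ ⟨r, rfl⟩ _ ⟨s, rfl⟩ t ⟨⟨u, v, huv⟩, ⟨u', v', huv'⟩⟩
    refine ⟨sigmaSet (r * s), ⟨r * s, rfl⟩, ?_, ?_⟩
    · exact ⟨u * u', v * (u' * s) + v' * (u * r) + v * v' * t, by linear_combination (u' * s + v' * t) * huv + huv'⟩
    · rintro x ⟨a, b, hab⟩
      exact ⟨⟨a * s, b, by linear_combination hab⟩, ⟨a * r, b, by linear_combination hab⟩⟩
  · apply Set.eq_univ_of_univ_subset
    rintro x -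
    exact Set.mem_sUnion.2 ⟨sigmaSet 1, ⟨1, rfl⟩, 1, 0, by ring⟩
end

section
/- Multiplication R × R → R is continuous when R carries the Macías topology τ_R; more precisely, for each r ∈ R the preimage of σ_r under multiplication is σ_r × σ_r. Hence (R, τ_R, ·) is a topological semigroup. -/
lemma sigma_preimage {R : Type*} [CommRing R] (r : R) :
    (fun p : R × R => p.1 * p.2) ⁻¹' sigmaSet r = sigmaSet r ×ˢ sigmaSet r := by
  ext ⟨s, t⟩
  simp only [Set.mem_preimage, Set.mem_prod, sigmaSet, Set.mem_setOf_eq]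
  constructor
  · rintro ⟨u, v, h⟩
    exact ⟨⟨u, v * t, by linear_combination h⟩, ⟨u, v * s, by linear_combination h⟩⟩
  · rintro ⟨⟨u1, v1, h1⟩, ⟨u2, v2, h2⟩⟩
    exact ⟨u1 * u2 * r + u1 * v2 * t + v1 * s * u2, v1 * v2, by linear_combination (u2*r + v2*t) * h1 + h2⟩

/-- The preimage of σ_r under multiplication is σ_r × σ_r, and multiplication is
continuous for the Macías topology, so (R, τ_R, ·) is a topological semigroup. -/
theorem mul_continuous_macias (R : Type*) [CommRing R] :
    letI : TopologicalSpace R :=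
      TopologicalSpace.generateFrom (Set.range (sigmaSet (R := R)))
    (∀ r : R, (fun p : R × R => p.1 * p.2) ⁻¹' sigmaSet r = sigmaSet r ×ˢ sigmaSet r) ∧
    Continuous fun p : R × R => p.1 * p.2 := by
  letI : TopologicalSpace R :=
    TopologicalSpace.generateFrom (Set.range (sigmaSet (R := R)))
  refine ⟨fun r => sigma_preimage r, ?_⟩
  rw [continuous_generateFrom_iff]
  rintro _ ⟨r, rfl⟩
  rw [sigma_preimage r]
  have ho : IsOpen (sigmaSet r) :=
    TopologicalSpace.GenerateOpen.basic _ ⟨r, rfl⟩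
  exact ho.prod ho
end
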